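/- arXiv:2204.03135 — 2 statements merged into one kernel-verified Lean document; each statement's English description precedes it below -/
import Mathlib

section
/- In ℝ³ with coordinates (x, y, t), the function u(x, y, t) = ((e^{4t} − 1)/4)(x² + y²) + (1/16)((7 e^{−4t})/4 − e^{4t}/4 − 4t²) satisfies σ₂(D²u) + σ₁(D²u) = 1 at every point of ℝ³, and u is 1-convex, i.e. Δu = σ₁(D²u) > 0 everywhere. -/
open scoped BigOperators

/-- `sigmaMat k A` is the `k`-th elementary symmetric function of the eigenvalues of the
symmetric matrix `A`, computed as the sum of all `k × k` principal minors of `A`. -/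
noncomputable def sigmaMat {n : ℕ} (k : ℕ) (A : Matrix (Fin n) (Fin n) ℝ) : ℝ :=
  ∑ s ∈ Finset.univ.powersetCard k,
    Matrix.det (fun i j : {x : Fin n // x ∈ s} => A i.1 j.1)

/-- The Hessian matrix `D²u` of `u : ℝⁿ → ℝ` at a point `x`. -/
noncomputable def hessian {n : ℕ} (u : EuclideanSpace ℝ (Fin n) → ℝ)
    (x : EuclideanSpace ℝ (Fin n)) : Matrix (Fin n) (Fin n) ℝ :=
  fun i j => iteratedFDeriv ℝ 2 u x ![EuclideanSpace.single i 1, EuclideanSpace.single j 1]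

/-! For `u = a(t) (x² + y²) + b(t)` the Hessian is explicit in `a, a', a'', b''`, and
`σ₂ + σ₁ = (4 a a'' + a'' - 4 a'²) (x² + y²) + 4 a² + 4 a + (4 a + 1) b''`.
With `a = (e^{4t} - 1)/4` the coefficient of `x² + y²` vanishes, since `4 a + 1 = a' = a''/4`,
and `b` is chosen so that the remaining term is `1`. Finally
`σ₁ = 4 e^{4t} (x² + y²) + (3 (e^{4t} - 1)² + 4) / (4 e^{4t}) > 0`. -/

open Real

theorem sigmaMat_one {n : ℕ} (A : Matrix (Fin n) (Fin n) ℝ) : sigmaMat 1 A = A.trace := by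
  rw [sigmaMat, Finset.powersetCard_one, Finset.sum_map]
  refine Finset.sum_congr rfl fun i _ => ?_
  let _ : Unique {x : Fin n // x ∈ ({i} : Finset (Fin n))} :=
    ⟨⟨⟨i, Finset.mem_singleton_self i⟩⟩,
      fun x => Subtype.ext (Finset.mem_singleton.mp x.2)⟩
  exact Matrix.det_unique (Matrix.of fun a b : {x // x ∈ ({i} : Finset (Fin n))} => A a.1 b.1)

theorem det_principal_submatrix_pair {ι : Type*} [DecidableEq ι] (A : Matrix ι ι ℝ) {i j : ι}
    (hij : i ≠ j) :
    Matrix.det (fun a b : {x : ι // x ∈ ({i, j} : Finset ι)} => A a.1 b.1)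
      = A i i * A j j - A i j * A j i := by
  let e : Fin 2 ≃ {x : ι // x ∈ ({i, j} : Finset ι)} :=
    { toFun := ![⟨i, by simp⟩, ⟨j, by simp⟩]
      invFun := fun x => if x.1 = i then 0 else 1
      left_inv := fun k => by fin_cases k <;> simp [hij.symm]
      right_inv := by
        rintro ⟨x, hx⟩
        rcases Finset.mem_insert.mp hx with rfl | hx
        · simp
        · obtain rfl := Finset.mem_singleton.mp hx
          simp [hij.symm] }
  change (A.submatrix Subtype.val Subtype.val).det = _
  rw [← Matrix.det_submatrix_equiv_self e, Matrix.det_fin_two]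
  simp [e]

theorem sigmaMat_two_fin_three (A : Matrix (Fin 3) (Fin 3) ℝ) :
    sigmaMat 2 A = (A 0 0 * A 1 1 - A 0 1 * A 1 0) + (A 0 0 * A 2 2 - A 0 2 * A 2 0)
      + (A 1 1 * A 2 2 - A 1 2 * A 2 1) := by
  have hpairs : (Finset.univ.powersetCard 2 : Finset (Finset (Fin 3)))
      = {{0, 1}, {0, 2}, {1, 2}} := by
    decide
  rw [sigmaMat, hpairs, Finset.sum_insert (by decide), Finset.sum_insert (by decide),
    Finset.sum_singleton, det_principal_submatrix_pair A (by decide),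
    det_principal_submatrix_pair A (by decide), det_principal_submatrix_pair A (by decide),
    add_assoc]

theorem hessian_apply_of_hasFDerivAt {n : ℕ} {u : EuclideanSpace ℝ (Fin n) → ℝ}
    {g : Fin n → EuclideanSpace ℝ (Fin n) → ℝ} {p : EuclideanSpace ℝ (Fin n)}
    {G : Fin n → EuclideanSpace ℝ (Fin n) →L[ℝ] ℝ}
    (hu : ∀ q, HasFDerivAt u (∑ k, g k q • EuclideanSpace.proj (𝕜 := ℝ) k) q)
    (hg : ∀ k, HasFDerivAt (g k) (G k) p) (i j : Fin n) :
    hessian u p i j = G j (EuclideanSpace.single i 1) := by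
  set Du := fun q => ∑ k, g k q • EuclideanSpace.proj (𝕜 := ℝ) k
  have hDu : fderiv ℝ u = Du := funext fun q => (hu q).fderiv
  have hDu_diff : DifferentiableAt ℝ Du p :=
    DifferentiableAt.fun_sum fun k _ => (hg k).differentiableAt.smul_const _
  have hpartial : (fun q => Du q (EuclideanSpace.single j 1)) = g j := by
    funext q
    simp [Du]
  have hD2 := fderiv_clm_apply hDu_diff (differentiableAt_const (EuclideanSpace.single j 1))
  rw [hpartial, (hg j).fderiv] at hD2
  simp [hessian, iteratedFDeriv_two_apply, hDu, hD2]

theorem hasFDerivAt_comp_coord {ι : Type*} [Fintype ι] {f f' : ℝ → ℝ}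
    (hf : ∀ t, HasDerivAt f (f' t) t) (k : ι) (q : EuclideanSpace ℝ ι) :
    HasFDerivAt (fun q : EuclideanSpace ℝ ι => f (q k))
      (f' (q k) • EuclideanSpace.proj (𝕜 := ℝ) k) q :=
  (hf (q k)).comp_hasFDerivAt q (EuclideanSpace.proj (𝕜 := ℝ) k).hasFDerivAt

section
variable {a a' a'' b b' b'' : ℝ → ℝ} {u : EuclideanSpace ℝ (Fin 3) → ℝ}

local notation "π" => EuclideanSpace.proj (𝕜 := ℝ) (ι := Fin 3)

theorem hessian_eq_of_eq_mul_sq_add_sq_add (ha : ∀ t, HasDerivAt a (a' t) t)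
    (ha' : ∀ t, HasDerivAt a' (a'' t) t) (hb : ∀ t, HasDerivAt b (b' t) t)
    (hb' : ∀ t, HasDerivAt b' (b'' t) t)
    (hu : ∀ p, u p = a (p 2) * (p 0 ^ 2 + p 1 ^ 2) + b (p 2)) (p : EuclideanSpace ℝ (Fin 3)) :
    hessian u p = !![2 * a (p 2), 0, 2 * a' (p 2) * p 0;
      0, 2 * a (p 2), 2 * a' (p 2) * p 1;
      2 * a' (p 2) * p 0, 2 * a' (p 2) * p 1, a'' (p 2) * (p 0 ^ 2 + p 1 ^ 2) + b'' (p 2)] := by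
  have hx (q) := (π 0).hasFDerivAt (x := q)
  have hy (q) := (π 1).hasFDerivAt (x := q)
  have hsq (q) := ((hx q).pow 2).add ((hy q).pow 2)
  let g : Fin 3 → EuclideanSpace ℝ (Fin 3) → ℝ :=
    ![fun q => 2 * a (q 2) * q 0, fun q => 2 * a (q 2) * q 1,
      fun q => a' (q 2) * (q 0 ^ 2 + q 1 ^ 2) + b' (q 2)]
  have hgrad (q) : HasFDerivAt u (∑ k, g k q • π k) q := by
    rw [show u = _ from funext hu]
    refine (((hasFDerivAt_comp_coord ha 2 q).mul (hsq q)).add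
      (hasFDerivAt_comp_coord hb 2 q)).congr_fderiv ?_
    ext w
    simp only [PiLp.proj_apply, nsmul_eq_mul, Nat.cast_ofNat, smul_add, Pi.add_apply,
      add_apply, smul_apply, smul_eq_mul, Matrix.cons_val', Matrix.cons_val_fin_one,
      Fin.sum_univ_three, Matrix.cons_val_zero, Matrix.cons_val_one, Matrix.cons_val, g]
    ring
  let G : Fin 3 → EuclideanSpace ℝ (Fin 3) →L[ℝ] ℝ :=
    ![(2 * a (p 2)) • π 0 + (2 * a' (p 2) * p 0) • π 2,
      (2 * a (p 2)) • π 1 + (2 * a' (p 2) * p 1) • π 2,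
      (2 * a' (p 2) * p 0) • π 0 + (2 * a' (p 2) * p 1) • π 1
        + (a'' (p 2) * (p 0 ^ 2 + p 1 ^ 2) + b'' (p 2)) • π 2]
  have hhess (k) : HasFDerivAt (g k) (G k) p := by
    fin_cases k <;> [
      refine (((hasFDerivAt_comp_coord ha 2 p).const_mul 2).mul (hx p)).congr_fderiv ?_;
      refine (((hasFDerivAt_comp_coord ha 2 p).const_mul 2).mul (hy p)).congr_fderiv ?_;
      refine (((hasFDerivAt_comp_coord ha' 2 p).mul (hsq p)).add
        (hasFDerivAt_comp_coord hb' 2 p)).congr_fderiv ?_] <;>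
    · ext w
      simp only [G, Fin.zero_eta, Fin.mk_one, Fin.reduceFinMk, Matrix.cons_val_zero,
        Matrix.cons_val_one, Matrix.cons_val, add_apply, smul_apply, smul_eq_mul, PiLp.proj_apply,
        nsmul_eq_mul, Nat.cast_ofNat, smul_add, Pi.add_apply]
      ring
  ext i j
  rw [hessian_apply_of_hasFDerivAt hgrad hhess]
  fin_cases i <;> fin_cases j <;> simp [G]
end

theorem example_nonpolynomial_one_convex_solution
    (u : EuclideanSpace ℝ (Fin 3) → ℝ)
    (hu : ∀ p : EuclideanSpace ℝ (Fin 3),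
      u p = ((Real.exp (4 * p 2) - 1) / 4) * ((p 0) ^ 2 + (p 1) ^ 2)
        + (1 / 16) * (7 * Real.exp (-(4 * p 2)) / 4 - Real.exp (4 * p 2) / 4
          - 4 * (p 2) ^ 2)) :
    ∀ p : EuclideanSpace ℝ (Fin 3),
      sigmaMat 2 (hessian u p) + sigmaMat 1 (hessian u p) = 1 ∧
      0 < sigmaMat 1 (hessian u p) := by
  have h4 (t : ℝ) := (hasDerivAt_id' t).const_mul 4
  have ha (t : ℝ) : HasDerivAt (fun s => (exp (4 * s) - 1) / 4) (exp (4 * t)) t :=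
    ((h4 t).exp.sub_const 1).div_const 4 |>.congr_deriv (by ring)
  have ha' (t : ℝ) : HasDerivAt (fun s => exp (4 * s)) (4 * exp (4 * t)) t :=
    (h4 t).exp.congr_deriv (by ring)
  have hb (t : ℝ) : HasDerivAt
      (fun s => 1 / 16 * (7 * exp (-(4 * s)) / 4 - exp (4 * s) / 4 - 4 * s ^ 2))
      ((-7 * exp (-(4 * t)) - exp (4 * t) - 8 * t) / 16) t :=
    (((((h4 t).fun_neg.exp.const_mul 7).div_const 4).sub ((h4 t).exp.div_const 4)).sub
      ((hasDerivAt_pow 2 t).const_mul 4)).const_mul (1 / 16) |>.congr_deriv (by ring)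
  have hb' (t : ℝ) : HasDerivAt (fun s => (-7 * exp (-(4 * s)) - exp (4 * s) - 8 * s) / 16)
      ((28 * exp (-(4 * t)) - 4 * exp (4 * t) - 8) / 16) t :=
    ((((h4 t).fun_neg.exp.const_mul (-7)).sub (h4 t).exp).sub
      ((hasDerivAt_id' t).const_mul 8)).div_const 16 |>.congr_deriv (by ring)
  intro p
  rw [sigmaMat_two_fin_three, sigmaMat_one, Matrix.trace_fin_three,
    hessian_eq_of_eq_mul_sq_add_sq_add ha ha' hb hb' hu p]
  simp only [Matrix.of_apply, Matrix.cons_val', Matrix.cons_val_zero, Matrix.cons_val_one,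
    Matrix.cons_val, Matrix.cons_val_fin_one]
  rw [exp_neg]
  set E := exp (4 * p 2)
  have hE : 0 < E := exp_pos _
  refine ⟨by field_simp; ring, ?_⟩
  calc 0 < 4 * E * (p 0 ^ 2 + p 1 ^ 2) + (3 * (E - 1) ^ 2 + 4) / (4 * E) := by positivity
    _ = _ := by field_simp; ring
end

section
/- Let n ≥ 2, let 1 ≤ k ≤ n − 1 and α > 0. If λ ∈ Γ̃_k and S_{k+1}(λ) > 0, then λ ∈ Γ̃_{k+1}; that is, σ_k(λ) > 0. -/
open scoped BigOperators

/-- The `k`-th elementary symmetric polynomial `σ_k(λ)` of `λ ∈ ℝⁿ`, indexed by `k : ℤ`,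
with the conventions `σ₀ = 1` and `σ_k = 0` for `k < 0` or `k > n`. -/
noncomputable def esymmZ (n : ℕ) (k : ℤ) (lam : Fin n → ℝ) : ℝ :=
  if k < 0 then 0 else ∑ s ∈ Finset.univ.powersetCard k.toNat, ∏ i ∈ s, lam i

/-- `S_k(λ) := σ_k(λ) + α σ_{k-1}(λ)`. -/
noncomputable def SZ (n : ℕ) (α : ℝ) (k : ℤ) (lam : Fin n → ℝ) : ℝ :=
  esymmZ n k lam + α * esymmZ n (k - 1) lam

/-- The Garding cone `Γ_m = {λ ∈ ℝⁿ : σ_j(λ) > 0 for j = 1,…,m}` (so `Γ₀ = ℝⁿ`). -/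
def Gamma (n : ℕ) (m : ℕ) : Set (Fin n → ℝ) :=
  {lam | ∀ j : ℕ, 1 ≤ j → j ≤ m → 0 < esymmZ n j lam}

/-- `Γ̃_k := Γ_{k-1} ∩ {λ : S_k(λ) > 0}`. -/
def GammaTilde (n : ℕ) (α : ℝ) (k : ℕ) : Set (Fin n → ℝ) :=
  Gamma n (k - 1) ∩ {lam | 0 < SZ n α k lam}

/-- `σ_k(λ|i)`: the `k`-th elementary symmetric polynomial of the vector obtained
from `λ` by deleting the entry `λ_i`. -/
noncomputable def esymmDel (n : ℕ) (k : ℤ) (lam : Fin n → ℝ) (i : Fin n) : ℝ :=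
  if k < 0 then 0 else
    ∑ s ∈ (Finset.univ.erase i).powersetCard k.toNat, ∏ j ∈ s, lam j

/-- `S_k(λ|i) := σ_k(λ|i) + α σ_{k-1}(λ|i)`.  In particular
`S_k^{ii}(λ) = ∂S_k/∂λ_i = S_{k-1}(λ|i) = SDel n α (k-1) lam i`. -/
noncomputable def SDel (n : ℕ) (α : ℝ) (k : ℤ) (lam : Fin n → ℝ) (i : Fin n) : ℝ :=
  esymmDel n k lam i + α * esymmDel n (k - 1) lam i

/-- `σ_k(λ|pq)`: the `k`-th elementary symmetric polynomial of the vector obtained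
from `λ` by deleting the entries `λ_p` and `λ_q`. -/
noncomputable def esymmDel2 (n : ℕ) (k : ℤ) (lam : Fin n → ℝ) (p q : Fin n) : ℝ :=
  if k < 0 then 0 else
    ∑ s ∈ ((Finset.univ.erase p).erase q).powersetCard k.toNat, ∏ l ∈ s, lam l

/-- `S_k^{pp,qq}(λ) = ∂²S_k/∂λ_p∂λ_q`, which equals
`σ_{k-2}(λ|pq) + α σ_{k-3}(λ|pq)` for `p ≠ q`, and `0` for `p = q`. -/
noncomputable def Spq (n : ℕ) (α : ℝ) (k : ℤ) (lam : Fin n → ℝ) (p q : Fin n) : ℝ :=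
  if p = q then 0 else esymmDel2 n (k - 2) lam p q + α * esymmDel2 n (k - 3) lam p q

/-!
Suppose `σ_k ≤ 0`. Then `S_k > 0` forces `α σ_{k-1} > -σ_k ≥ 0` and `S_{k+1} > 0` forces
`σ_{k+1} > -α σ_k ≥ 0`; multiplying, `σ_{k-1} σ_{k+1} > σ_k²`. This contradicts Newton's
inequality `σ_{k-1} σ_{k+1} ≤ σ_k²`, which holds for every real vector.

Newton's inequality is read off the coefficients of `∏ (X + λ_i)`. Differentiation preserves
real-rootedness (Rolle), so taking derivatives reduces it to the three lowest coefficients of a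
real-rooted polynomial, of degree `m` say. There, with roots `r_i` and `P_i = ∏_{l ≠ i} r_l`, one
has `∑ P_i = e_{m-1}` and `∑ P_i² = e_{m-1}² - 2 e_m e_{m-2}`, and Cauchy–Schwarz finishes.
-/

open Finset Polynomial

theorem Multiset.esymm_cons_succ {R : Type*} [CommSemiring R] (a : R) (s : Multiset R) (n : ℕ) :
    (a ::ₘ s).esymm (n + 1) = s.esymm (n + 1) + a * s.esymm n := by
  simp [Multiset.esymm, Multiset.powersetCard_cons, Multiset.sum_map_mul_left]

theorem Multiset.esymm_eq_zero_of_card_lt {R : Type*} [CommSemiring R] {s : Multiset R} {n : ℕ}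
    (h : Multiset.card s < n) : s.esymm n = 0 := by
  simp [Multiset.esymm, Multiset.powersetCard_eq_empty _ h]

theorem Finset.sum_sum_powersetCard_erase {ι M : Type*} [DecidableEq ι] [AddCommMonoid M]
    (s : Finset ι) (j : ℕ) (f : Finset ι → M) :
    ∑ i ∈ s, ∑ t ∈ (s.erase i).powersetCard j, f t = (#s - j) • ∑ t ∈ s.powersetCard j, f t := by
  have hfilter : ∀ i, (s.erase i).powersetCard j = (s.powersetCard j).filter (i ∉ ·) := by
    intro i
    ext t
    simp only [mem_powersetCard, subset_erase, mem_filter]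
    tauto
  simp_rw [hfilter, sum_filter]
  rw [sum_comm, smul_sum]
  refine sum_congr rfl fun t ht => ?_
  obtain ⟨hts, rfl⟩ := mem_powersetCard.mp ht
  rw [← sum_filter, sum_const, filter_not, filter_mem_eq_inter, inter_eq_right.mpr hts,
    card_sdiff_of_subset hts]

theorem Finset.sum_esymm_map_erase {ι R : Type*} [DecidableEq ι] [CommSemiring R]
    (s : Finset ι) (g : ι → R) (j : ℕ) :
    ∑ i ∈ s, ((s.erase i).val.map g).esymm j = (#s - j) • (s.val.map g).esymm j := by
  simp only [esymm_map_val, sum_sum_powersetCard_erase]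

theorem Finset.map_val_eq_cons_erase {ι R : Type*} [DecidableEq ι] {s : Finset ι} {i : ι}
    (hi : i ∈ s) (g : ι → R) : s.val.map g = g i ::ₘ (s.erase i).val.map g := by
  rw [← Multiset.map_cons, ← insert_val_of_notMem (notMem_erase i s), insert_erase hi]

theorem Fintype.two_mul_esymm_card_mul_esymm_le {ι : Type*} [Fintype ι] [DecidableEq ι]
    (g : ι → ℝ) (k : ℕ) (hcard : Fintype.card ι = k + 2) :
    2 * (k + 2) * (univ.val.map g).esymm (k + 2) * (univ.val.map g).esymm k
      ≤ (k + 1) * (univ.val.map g).esymm (k + 1) ^ 2 := by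
  set e := (univ.val.map g).esymm
  -- `P i = ∏_{l ≠ i} g l`, as `univ.erase i` has exactly `k + 1` elements
  set P := fun i => ((univ.erase i).val.map g).esymm (k + 1)
  set D := fun i => ((univ.erase i).val.map g).esymm k
  have hcard_erase : ∀ i : ι, Multiset.card ((univ.erase i).val.map g) = k + 1 := by
    intro i
    simp [hcard]
  have htop : ∀ i, e (k + 2) = g i * P i := by
    intro i
    simp only [e, P]
    rw [map_val_eq_cons_erase (mem_univ i), Multiset.esymm_cons_succ,
      Multiset.esymm_eq_zero_of_card_lt (by rw [hcard_erase]; omega), zero_add]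
  have hsplit : ∀ i, e (k + 1) = P i + g i * D i := fun i => by
    simp only [e, P, D]
    rw [map_val_eq_cons_erase (mem_univ i), Multiset.esymm_cons_succ]
  have hsumP : ∑ i, P i = e (k + 1) := by
    rw [sum_esymm_map_erase, card_univ, hcard, show k + 2 - (k + 1) = 1 by omega, one_smul]
  have hsumD : ∑ i, D i = 2 * e k := by
    rw [sum_esymm_map_erase, card_univ, hcard, show k + 2 - k = 2 by omega, nsmul_eq_mul]
    norm_num [e]
  have hsumPsq : ∑ i, P i ^ 2 = e (k + 1) ^ 2 - 2 * e (k + 2) * e k :=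
    calc ∑ i, P i ^ 2 = ∑ i, (P i * e (k + 1) - e (k + 2) * D i) := by
          refine Finset.sum_congr rfl fun i _ => ?_
          rw [hsplit i, htop i]
          ring
      _ = e (k + 1) ^ 2 - 2 * e (k + 2) * e k := by
          rw [sum_sub_distrib, ← sum_mul, ← mul_sum, hsumP, hsumD]
          ring
  have hCS := sq_sum_le_card_mul_sum_sq (s := univ) (f := P)
  rw [hsumP, hsumPsq, card_univ, hcard] at hCS
  push_cast at hCS
  linarith

theorem Multiset.two_mul_esymm_card_mul_esymm_le (s : Multiset ℝ) (k : ℕ)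
    (hs : Multiset.card s = k + 2) :
    2 * (k + 2) * s.esymm (k + 2) * s.esymm k ≤ (k + 1) * s.esymm (k + 1) ^ 2 := by
  classical
  simpa using Fintype.two_mul_esymm_card_mul_esymm_le (fun x : s => (x : ℝ)) k (by simpa using hs)

namespace Polynomial

theorem card_roots_derivative_eq_natDegree {p : ℝ[X]}
    (hroots : Multiset.card p.roots = p.natDegree) :
    Multiset.card (derivative p).roots = (derivative p).natDegree := by
  have := (derivative p).card_roots'
  have := p.card_roots_le_derivative
  rw [natDegree_derivative] at *
  omega

theorem card_roots_iterate_derivative_eq_natDegree {p : ℝ[X]}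
    (hroots : Multiset.card p.roots = p.natDegree) (j : ℕ) :
    Multiset.card (derivative^[j] p).roots = (derivative^[j] p).natDegree := by
  induction j with
  | zero => exact hroots
  | succ j ih =>
    rw [Function.iterate_succ_apply']
    exact card_roots_derivative_eq_natDegree ih

theorem natDegree_iterate_derivative_eq {R : Type*} [Semiring R] [IsAddTorsionFree R]
    (p : R[X]) (j : ℕ) : (derivative^[j] p).natDegree = p.natDegree - j := by
  induction j with
  | zero => rfl
  | succ j ih => rw [Function.iterate_succ_apply', natDegree_derivative, ih, Nat.sub_sub]

theorem two_mul_coeff_zero_mul_coeff_two_le {p : ℝ[X]}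
    (hroots : Multiset.card p.roots = p.natDegree) {k : ℕ} (hdeg : p.natDegree = k + 2) :
    2 * (k + 2) * p.coeff 0 * p.coeff 2 ≤ (k + 1) * p.coeff 1 ^ 2 := by
  have hcoeff : ∀ i ≤ k + 2,
      p.coeff i = p.leadingCoeff * (-1) ^ (k + 2 - i) * p.roots.esymm (k + 2 - i) := by
    intro i hi
    rw [coeff_eq_esymm_roots_of_card hroots (by omega), hdeg]
  have hsign : ((-1 : ℝ) ^ k) ^ 2 = 1 := by rw [← pow_mul, pow_mul', neg_one_sq, one_pow]
  have htop := Multiset.two_mul_esymm_card_mul_esymm_le p.roots k (by rw [hroots, hdeg])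
  rw [hcoeff 0 (by omega), hcoeff 1 (by omega), hcoeff 2 (by omega),
    show k + 2 - 1 = k + 1 by omega, Nat.add_sub_cancel, Nat.sub_zero]
  linear_combination p.leadingCoeff ^ 2 * htop + p.leadingCoeff ^ 2 *
    (2 * (k + 2) * p.roots.esymm (k + 2) * p.roots.esymm k
      - (k + 1) * p.roots.esymm (k + 1) ^ 2) * hsign

theorem newton_ineq_coeff {p : ℝ[X]} (hroots : Multiset.card p.roots = p.natDegree)
    {j k : ℕ} (hdeg : p.natDegree = j + k + 2) :
    (k + 2) * (j + 2) * (p.coeff j * p.coeff (j + 2))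
      ≤ (k + 1) * (j + 1) * p.coeff (j + 1) ^ 2 := by
  have hq := two_mul_coeff_zero_mul_coeff_two_le
    (card_roots_iterate_derivative_eq_natDegree hroots j) (k := k)
    (by rw [natDegree_iterate_derivative_eq, hdeg]; omega)
  simp only [coeff_iterate_derivative, nsmul_eq_mul, zero_add] at hq
  rw [add_comm 1 j, add_comm 2 j] at hq
  have hd1 : ((j + 1).descFactorial j : ℝ) = (j + 1) * j.descFactorial j := by
    have := Nat.succ_descFactorial j j
    rw [Nat.add_sub_cancel_left, one_mul] at this
    exact_mod_cast this
  have hd2 : ((j + 2).descFactorial j : ℝ) = (j + 2) * (j + 1) * j.descFactorial j / 2 := by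
    have := Nat.succ_descFactorial (j + 1) j
    rw [show j + 1 + 1 - j = 2 by omega] at this
    rw [eq_div_iff two_ne_zero, mul_assoc, ← hd1]
    exact_mod_cast (mul_comm _ _).trans this
  have hpos : (0 : ℝ) < (j + 1) * (j.descFactorial j : ℝ) ^ 2 := by
    have : 0 < j.descFactorial j := by
      rw [Nat.descFactorial_self]
      exact j.factorial_pos
    positivity
  rw [hd1, hd2] at hq
  refine le_of_mul_le_mul_left ?_ hpos
  linear_combination hq

theorem coeff_mul_coeff_add_two_le_sq {p : ℝ[X]}
    (hroots : Multiset.card p.roots = p.natDegree) (j : ℕ) :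
    p.coeff j * p.coeff (j + 2) ≤ p.coeff (j + 1) ^ 2 := by
  rcases lt_or_ge p.natDegree (j + 2) with hlt | hle
  · rw [coeff_eq_zero_of_natDegree_lt hlt, mul_zero]
    positivity
  obtain ⟨k, hk⟩ := Nat.exists_eq_add_of_le hle
  have hnewton := newton_ineq_coeff hroots (j := j) (k := k) (by omega)
  have hweights : ((k : ℝ) + 1) * (j + 1) * p.coeff (j + 1) ^ 2
      ≤ ((k : ℝ) + 2) * (j + 2) * p.coeff (j + 1) ^ 2 := by
    gcongr <;> norm_num
  exact le_of_mul_le_mul_left (hnewton.trans hweights) (by positivity)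

end Polynomial

theorem Multiset.esymm_mul_esymm_add_two_le_sq (s : Multiset ℝ) (k : ℕ) :
    s.esymm k * s.esymm (k + 2) ≤ s.esymm (k + 1) ^ 2 := by
  rcases lt_or_ge (card s) (k + 2) with hlt | hle
  · rw [esymm_eq_zero_of_card_lt hlt, mul_zero]
    positivity
  obtain ⟨a, ha⟩ : ∃ a, card s = a + k + 2 := ⟨card s - (k + 2), by omega⟩
  set p := (s.map fun r => X + C r).prod
  have hroots : card p.roots = p.natDegree := by
    have hp : p = ((s.map Neg.neg).map fun r => X - C r).prod := by
      simp [p, Multiset.map_map, sub_eq_add_neg]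
    rw [hp, roots_multiset_prod_X_sub_C, natDegree_multiset_prod_X_sub_C_eq_card]
  have := p.coeff_mul_coeff_add_two_le_sq hroots a
  rwa [prod_X_add_C_coeff _ (by omega), prod_X_add_C_coeff _ (by omega),
    prod_X_add_C_coeff _ (by omega), ha, show a + k + 2 - a = k + 2 by omega,
    show a + k + 2 - (a + 2) = k by omega, show a + k + 2 - (a + 1) = k + 1 by omega,
    mul_comm] at this

theorem esymmZ_natCast (n j : ℕ) (lam : Fin n → ℝ) :
    esymmZ n j lam = (univ.val.map lam).esymm j := by
  rw [esymmZ, if_neg (by omega), esymm_map_val, Int.toNat_natCast]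

theorem esymmZ_sub_one_mul_esymmZ_add_one_le_sq (n : ℕ) (k : ℤ) (lam : Fin n → ℝ) :
    esymmZ n (k - 1) lam * esymmZ n (k + 1) lam ≤ esymmZ n k lam ^ 2 := by
  rcases lt_or_ge k 1 with hk | hk
  · rw [esymmZ, if_pos (by omega), zero_mul]
    positivity
  obtain ⟨j, rfl⟩ : ∃ j : ℕ, k = j + 1 := ⟨(k - 1).toNat, by omega⟩
  have := (univ.val.map lam).esymm_mul_esymm_add_two_le_sq j
  rwa [add_sub_cancel_right, add_assoc, show (1 + 1 : ℤ) = (2 : ℕ) by norm_num,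
    ← Nat.cast_one, ← Nat.cast_add, ← Nat.cast_add, esymmZ_natCast, esymmZ_natCast,
    esymmZ_natCast]

theorem esymmZ_pos_of_SZ_pos {n : ℕ} {α : ℝ} (hα : 0 < α) {k : ℤ} {lam : Fin n → ℝ}
    (hS : 0 < SZ n α k lam) (hS_succ : 0 < SZ n α (k + 1) lam) : 0 < esymmZ n k lam := by
  rw [SZ] at hS
  rw [SZ, add_sub_cancel_right] at hS_succ
  by_contra! hle
  have hprod : α * esymmZ n k lam ^ 2 < α * (esymmZ n (k - 1) lam * esymmZ n (k + 1) lam) :=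
    calc α * esymmZ n k lam ^ 2 = (-esymmZ n k lam) * (-(α * esymmZ n k lam)) := by ring
      _ < (α * esymmZ n (k - 1) lam) * esymmZ n (k + 1) lam :=
        mul_lt_mul'' (by linarith) (by linarith) (by linarith) (by nlinarith)
      _ = α * (esymmZ n (k - 1) lam * esymmZ n (k + 1) lam) := by ring
  have := mul_le_mul_of_nonneg_left (esymmZ_sub_one_mul_esymmZ_add_one_le_sq n k lam) hα.le
  linarith

theorem gammaTilde_succ_of_S_succ_pos_general
    (n : ℕ) (k : ℕ)
    (α : ℝ) (hα : 0 < α)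
    (lam : Fin n → ℝ) (hlam : lam ∈ GammaTilde n α k)
    (hS : 0 < SZ n α (k + 1) lam) :
    lam ∈ GammaTilde n α (k + 1) ∧ 0 < esymmZ n k lam := by
  obtain ⟨hΓ, hSk⟩ := hlam
  have hσ : 0 < esymmZ n k lam := esymmZ_pos_of_SZ_pos hα hSk hS
  refine ⟨⟨fun j hj hjk => ?_, by exact_mod_cast hS⟩, hσ⟩
  rcases lt_or_eq_of_le hjk with hjk | rfl
  · exact hΓ j hj (by omega)
  · exact hσ

theorem gammaTilde_succ_of_S_succ_pos
    (n : ℕ) (hn : 2 ≤ n) (k : ℕ) (hk1 : 1 ≤ k) (hk : k ≤ n - 1)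
    (α : ℝ) (hα : 0 < α)
    (lam : Fin n → ℝ) (hlam : lam ∈ GammaTilde n α k)
    (hS : 0 < SZ n α (k + 1) lam) :
    lam ∈ GammaTilde n α (k + 1) ∧ 0 < esymmZ n k lam :=
  gammaTilde_succ_of_S_succ_pos_general n k α hα lam hlam hS
end
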